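/- arXiv:1906.10396 — 2 statements merged into one kernel-verified Lean document; each statement's English description precedes it below -/
import Mathlib

section
/- Let n, N and r be positive integers with r < n. Suppose W₁,…,W_N ∈ ℝ^{(r+1)×(n−r)} are such that the horizontally concatenated matrix W = [W₁ W₂ ⋯ W_N] ∈ ℝ^{(r+1)×N(n−r)} satisfies rank(W) ≤ 1, and for each ℓ = 1,…,N every antidiagonal sum of Wₗ vanishes, i.e., ∑_{i+j=k+1} Wₗ(i,j) = 0 for all k = 1,…,n. Then W = 0. -/
/-!
A matrix of rank at most one is an outer product `u vᵀ`, so each block is `Wₗ = u vₗᵀ`. The `k`-th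
antidiagonal sum of `u vₗᵀ` is the coefficient of `X ^ k` in `(∑ uᵢ Xⁱ) (∑ vₗⱼ Xʲ)`, and the
antidiagonals `k < n` cover every entry, so this product of polynomials vanishes. As `ℝ[X]` has no
zero divisors, `u = 0` or `vₗ = 0` for each `ℓ`, hence `W = 0`.
-/

open Polynomial

namespace Matrix

theorem exists_eq_vecMulVec_of_rank_le_one {K m n : Type*} [Field K] [Fintype m] [Fintype n]
    {A : Matrix m n K} (hA : A.rank ≤ 1) : ∃ (u : m → K) (v : n → K), A = vecMulVec u v := by
  rw [rank_eq_finrank_span_cols] at hA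
  obtain ⟨u, hu⟩ := finrank_le_one_iff.mp hA
  choose v hv using fun p => hu ⟨Aᵀ p, Submodule.subset_span ⟨p, rfl⟩⟩
  refine ⟨u, v, ext fun i p => ?_⟩
  have hcol := congrFun (congrArg Subtype.val (hv p)) i
  simp only [SetLike.val_smul, Pi.smul_apply, smul_eq_mul, transpose_apply] at hcol
  rw [vecMulVec_apply, ← hcol, mul_comm]

variable {R : Type*} {a b : ℕ}

def antidiagSum [AddCommMonoid R] (A : Matrix (Fin a) (Fin b) R) (k : ℕ) : R :=
  ∑ i : Fin a, ∑ j : Fin b, if (i : ℕ) + (j : ℕ) = k then A i j else 0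

theorem antidiagSum_vecMulVec [Semiring R] [DecidableEq R] (u : Fin a → R) (v : Fin b → R)
    (k : ℕ) : antidiagSum (vecMulVec u v) k = (ofFn a u * ofFn b v).coeff k := by
  simp only [ofFn_eq_sum_monomial, Finset.sum_mul_sum, monomial_mul_monomial, finsetSum_coeff,
    coeff_monomial, antidiagSum, vecMulVec_apply, eq_comm]

theorem eq_zero_or_eq_zero_of_antidiagSum_vecMulVec [Semiring R] [NoZeroDivisors R]
    {u : Fin a → R} {v : Fin b → R} (h : ∀ k, antidiagSum (vecMulVec u v) k = 0) :
    u = 0 ∨ v = 0 := by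
  classical
  have hprod : ofFn a u * ofFn b v = 0 := by
    ext k
    rw [← antidiagSum_vecMulVec, h, coeff_zero]
  simpa only [mul_eq_zero, map_eq_zero_iff _ (injective_ofFn _)] using hprod

end Matrix

theorem stmt3_general (n N r : ℕ)
    (W : Fin N → Matrix (Fin (r + 1)) (Fin (n - r)) ℝ)
    (hrank : Matrix.rank
        (Matrix.of fun (i : Fin (r + 1)) (p : Fin N × Fin (n - r)) => W p.1 i p.2) ≤ 1)
    (hdiag : ∀ ℓ : Fin N, ∀ k : Fin n, ∑ i : Fin (r + 1), ∑ j : Fin (n - r),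
        (if (i : ℕ) + (j : ℕ) = (k : ℕ) then W ℓ i j else 0) = 0) :
    (Matrix.of fun (i : Fin (r + 1)) (p : Fin N × Fin (n - r)) => W p.1 i p.2) = 0 := by
  obtain ⟨u, v, huv⟩ := Matrix.exists_eq_vecMulVec_of_rank_le_one hrank
  have hblock (ℓ : Fin N) : W ℓ = Matrix.vecMulVec u fun j => v (ℓ, j) :=
    Matrix.ext fun i j => congrFun (congrFun huv i) (ℓ, j)
  -- the antidiagonals `k ≥ n` are empty, since `i + j < n` for every entry
  have hsum (ℓ : Fin N) (k : ℕ) : (W ℓ).antidiagSum k = 0 := by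
    by_cases hk : k < n
    · exact hdiag ℓ ⟨k, hk⟩
    · exact Finset.sum_eq_zero fun i _ => Finset.sum_eq_zero fun j _ => if_neg (by omega)
  rw [huv]
  ext i ⟨ℓ, j⟩
  rcases Matrix.eq_zero_or_eq_zero_of_antidiagSum_vecMulVec (hblock ℓ ▸ hsum ℓ) with hu | hv
  · simp [Matrix.vecMulVec_apply, hu]
  · simp [Matrix.vecMulVec_apply, show v (ℓ, j) = 0 from congrFun hv j]

/-- if the horizontally concatenated matrix `W = [W₁ ⋯ W_N]`
(columns indexed by `Fin N × Fin (n-r)`) has rank at most 1 and every antidiagonal sum of each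
block `Wₗ` vanishes (0-based: `∑_{i+j=k} Wₗ(i,j) = 0` for `k = 0,…,n-1`), then `W = 0`. -/
theorem stmt3 (n N r : ℕ) (hn : 0 < n) (hN : 0 < N) (hr : 0 < r) (hrn : r < n)
    (W : Fin N → Matrix (Fin (r + 1)) (Fin (n - r)) ℝ)
    (hrank : Matrix.rank
        (Matrix.of fun (i : Fin (r + 1)) (p : Fin N × Fin (n - r)) => W p.1 i p.2) ≤ 1)
    (hdiag : ∀ ℓ : Fin N, ∀ k : Fin n, ∑ i : Fin (r + 1), ∑ j : Fin (n - r),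
        (if (i : ℕ) + (j : ℕ) = (k : ℕ) then W ℓ i j else 0) = 0) :
    (Matrix.of fun (i : Fin (r + 1)) (p : Fin N × Fin (n - r)) => W p.1 i p.2) = 0 :=
  stmt3_general n N r W hrank hdiag
end

section
/- Let n ≥ 3 be an integer and let ŷ ∈ ℝⁿ satisfy rank(H₂(ŷ)) = 2, where H₂(ŷ) ∈ ℝ^{2×(n−1)} is the 2-row Hankel matrix of ŷ. Then there exists ȳ ∈ ℝⁿ with rank(H₂(ȳ)) = 1 and ‖ȳ − ŷ‖ < ‖ŷ‖. -/
/-- The 2-row Hankel operator `H₂ : ℝⁿ → ℝ^{2×(n-1)}` (0-based indices):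
`(H₂ y)(i,j) = y (i + j)`. -/
def hankel2 (n : ℕ) (hn : 1 < n) (y : EuclideanSpace ℝ (Fin n)) :
    Matrix (Fin 2) (Fin (n - 1)) ℝ :=
  fun i j => y ⟨i.val + j.val, by omega⟩

/-!
A rank-two `H₂(ŷ)` forces `ŷ ≠ 0`. By invertibility of a Vandermonde matrix, `ŷ` is not orthogonal
to some geometric vector `g = (1, r, …, r^{n-1})`, and `H₂(s • g)` is the rank-one matrix
`[1; r] ⊗ (s, s r, …, s r^{n-2})`. The orthogonal projection of `ŷ` onto the line `ℝ g` is then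
strictly closer to `ŷ` than `0` is.
-/

open Matrix

theorem Matrix.rank_eq_zero_iff {K m n : Type*} [Field K] [Fintype m] [Fintype n]
    {A : Matrix m n K} : A.rank = 0 ↔ A = 0 := by
  rw [rank_eq_finrank_span_row, Submodule.finrank_eq_zero, Submodule.span_eq_bot,
    Set.forall_mem_range]
  exact funext_iff.symm

theorem Matrix.rank_vecMulVec_eq_one {K m n : Type*} [Field K] [Fintype m] [Fintype n]
    {w : m → K} {v : n → K} (hw : w ≠ 0) (hv : v ≠ 0) : (vecMulVec w v).rank = 1 := by
  obtain ⟨i, hi⟩ := Function.ne_iff.mp hw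
  obtain ⟨j, hj⟩ := Function.ne_iff.mp hv
  have hne : (vecMulVec w v).rank ≠ 0 :=
    fun h => mul_ne_zero hi hj congr($(rank_eq_zero_iff.mp h) i j)
  have := rank_vecMulVec_le w v
  omega

theorem hankel2_zero (n : ℕ) (hn : 1 < n) : hankel2 n hn 0 = 0 := rfl

def geomVec (n : ℕ) (r : ℝ) : EuclideanSpace ℝ (Fin n) :=
  WithLp.toLp 2 fun i => r ^ (i : ℕ)

theorem hankel2_smul_geomVec (n : ℕ) (hn : 1 < n) (s r : ℝ) :
    hankel2 n hn (s • geomVec n r) =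
      vecMulVec ![1, r] fun j : Fin (n - 1) => s * r ^ (j : ℕ) := by
  ext i j
  fin_cases i
  · simp [hankel2, geomVec, vecMulVec_apply]
  · simp [hankel2, geomVec, vecMulVec_apply, pow_add, mul_left_comm]

theorem rank_hankel2_smul_geomVec (n : ℕ) (hn : 1 < n) {s : ℝ} (hs : s ≠ 0) (r : ℝ) :
    (hankel2 n hn (s • geomVec n r)).rank = 1 := by
  rw [hankel2_smul_geomVec]
  refine rank_vecMulVec_eq_one (by simp [funext_iff, Fin.forall_fin_two]) fun h => ?_
  simpa [hs] using congrFun h ⟨0, by omega⟩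

theorem inner_geomVec (n : ℕ) (r : ℝ) (y : EuclideanSpace ℝ (Fin n)) :
    inner ℝ (geomVec n r) y = ∑ i, y i * r ^ (i : ℕ) := by
  simp [geomVec, PiLp.inner_apply]

theorem exists_inner_geomVec_ne_zero {n : ℕ} {y : EuclideanSpace ℝ (Fin n)} (hy : y ≠ 0) :
    ∃ r, inner ℝ (geomVec n r) y ≠ 0 := by
  by_contra! h
  refine hy (WithLp.ofLp_injective 2 ?_)
  refine eq_zero_of_forall_index_sum_mul_pow_eq_zero (f := fun i : Fin n => (i : ℝ))
    (fun a b hab => Fin.ext (by simpa using hab)) fun j => ?_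
  simpa [inner_geomVec] using h j

theorem exists_smul_norm_sub_lt {E : Type*} [NormedAddCommGroup E] [InnerProductSpace ℝ E]
    {v y : E} (h : inner ℝ v y ≠ 0) : ∃ s : ℝ, ‖s • v - y‖ < ‖y‖ := by
  have hv : 0 < ‖v‖ ^ 2 := by
    have : v ≠ 0 := by rintro rfl; simp at h
    positivity
  set c := inner ℝ v y
  refine ⟨c / ‖v‖ ^ 2, pow_lt_pow_iff_left₀ (norm_nonneg _) (norm_nonneg _) two_ne_zero |>.mp ?_⟩
  have : 0 < c ^ 2 / ‖v‖ ^ 2 := by positivity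
  calc ‖(c / ‖v‖ ^ 2) • v - y‖ ^ 2 = ‖y‖ ^ 2 - c ^ 2 / ‖v‖ ^ 2 := by
        rw [norm_sub_sq_real, norm_smul, real_inner_smul_left, mul_pow, Real.norm_eq_abs, sq_abs]
        field_simp
        ring
    _ < ‖y‖ ^ 2 := by linarith

/-- if `n ≥ 3` and `rank(H₂(ŷ)) = 2`, then there exists `ȳ` with
`rank(H₂(ȳ)) = 1` and `‖ȳ − ŷ‖ < ‖ŷ‖`. -/
theorem stmt11 (n : ℕ) (hn : 3 ≤ n)
    (yhat : EuclideanSpace ℝ (Fin n))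
    (hyhat : Matrix.rank (hankel2 n (by omega) yhat) = 2) :
    ∃ ybar : EuclideanSpace ℝ (Fin n),
      Matrix.rank (hankel2 n (by omega) ybar) = 1 ∧ ‖ybar - yhat‖ < ‖yhat‖ := by
  have hyhat0 : yhat ≠ 0 := by
    rintro rfl
    simp [hankel2_zero] at hyhat
  obtain ⟨r, hr⟩ := exists_inner_geomVec_ne_zero hyhat0
  obtain ⟨s, hs⟩ := exists_smul_norm_sub_lt hr
  have hs0 : s ≠ 0 := by
    rintro rfl
    simp at hs
  exact ⟨s • geomVec n r, rank_hankel2_smul_geomVec n _ hs0 r, hs⟩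
end
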